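/- arXiv:0801.1478 — 3 statements merged into one kernel-verified Lean document; each statement's English description precedes it below -/
import Mathlib

section
/- Let C be a d-uniform clutter, d ≥ 3, whose vertex set admits a partition into d minimal vertex covers X_i = {x_{2i-1}, x_{2i}} of size 2. If C satisfies the König property and C has a minimal vertex cover of size d, then the incidence matrix A of C has rank exactly d+1. -/
/-!
Since the pairs `X_k` are covers and edges have `d` vertices, every edge, and likewise the
minimal cover `S` of size `d` (as `d ≠ 2`), picks exactly one vertex of each pair. Label the
vertices of pair `k` as `(k, true) ∈ S` and `(k, false)`. An edge `e` is then the transversal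
`{(k, k ∈ P e)}` with `P e = {k | e ∩ X_k ⊆ S}`, and its column is `c + ∑_{k ∈ P e} v_k`, where
`c` is the indicator of `{(k, false)}` and `v_k = δ_(k,true) - δ_(k,false)`. These `d + 1`
vectors are independent, so the rank is at most `d + 1`.

Conversely, minimality of `S` yields for each `i` an edge meeting `S` only in `(i, true)`, so
`c + v_i` is a column. By König there are two disjoint edges; their sets `P` are complementary,
so as `d ≠ 2` one of them, `P`, has `|P| ≠ 1`. Then
`(c + ∑_{k ∈ P} v_k) - ∑_{k ∈ P} (c + v_k) = (1 - |P|) c` puts `c`, hence every `v_k`, in the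
column space.
-/

open Finset

/-- A clutter on vertex set `Fin n`: a family of nonempty edges, none contained in another. -/
structure Clutter (n : ℕ) where
  edges : Finset (Finset (Fin n))
  nonempty_edges : ∀ e ∈ edges, e.Nonempty
  antichain : ∀ e ∈ edges, ∀ f ∈ edges, e ⊆ f → e = f

namespace Clutter

variable {n : ℕ}

/-- `C` is `d`-uniform: every edge has exactly `d` vertices. -/
def Uniform (C : Clutter n) (d : ℕ) : Prop := ∀ e ∈ C.edges, e.card = d

/-- `S` is a vertex cover of `C`. -/
def IsCover (C : Clutter n) (S : Finset (Fin n)) : Prop := ∀ e ∈ C.edges, (e ∩ S).Nonempty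

/-- `S` is a minimal vertex cover of `C`. -/
def IsMinCover (C : Clutter n) (S : Finset (Fin n)) : Prop :=
  C.IsCover S ∧ ∀ T ⊆ S, C.IsCover T → T = S

/-- The vertex covering number `α₀(C)`. -/
noncomputable def coverNumber (C : Clutter n) : ℕ :=
  sInf {k | ∃ S : Finset (Fin n), C.IsCover S ∧ S.card = k}

/-- The edge independence (matching) number `β₁(C)`. -/
noncomputable def matchNumber (C : Clutter n) : ℕ :=
  sSup {k | ∃ M : Finset (Finset (Fin n)), M ⊆ C.edges ∧
    (∀ e ∈ M, ∀ f ∈ M, e ≠ f → Disjoint e f) ∧ M.card = k}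

/-- `C` has a perfect matching: pairwise disjoint edges covering all vertices. -/
def HasPerfectMatching (C : Clutter n) : Prop :=
  ∃ M : Finset (Finset (Fin n)), M ⊆ C.edges ∧
    (∀ e ∈ M, ∀ f ∈ M, e ≠ f → Disjoint e f) ∧ (∀ i : Fin n, ∃ e ∈ M, i ∈ e)

/-- The set covering polyhedron `Q(A) = {x : x ≥ 0, xA ≥ 1}`. -/
def QA (C : Clutter n) : Set (Fin n → ℝ) :=
  {x | (∀ i, 0 ≤ x i) ∧ ∀ e ∈ C.edges, 1 ≤ ∑ i ∈ e, x i}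

/-- `Q(A)` is an integral polyhedron: all its vertices (extreme points) are integral. -/
def QAIntegral (C : Clutter n) : Prop :=
  ∀ x ∈ Set.extremePoints ℝ C.QA, ∀ i, ∃ z : ℤ, x i = (z : ℝ)

/-- Deletion of a vertex: remove `v` and all edges through it. -/
def delete (C : Clutter n) (v : Fin n) : Clutter n where
  edges := C.edges.filter (fun e => v ∉ e)
  nonempty_edges := fun e he => C.nonempty_edges e (mem_filter.mp he).1
  antichain := fun e he f hf hef =>
    C.antichain e (mem_filter.mp he).1 f (mem_filter.mp hf).1 hef

/-- The edges of the minor of `C` obtained by deleting the vertices in `D`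
(setting them to `0`) and contracting the vertices in `U` (setting them to `1`):
the minimal nonempty sets of the form `e \ U` with `e` an edge disjoint from `D`. -/
def minorEdges (C : Clutter n) (D U : Finset (Fin n)) : Finset (Finset (Fin n)) :=
  ((C.edges.filter (fun e => Disjoint e D)).image (fun e => e \ U)).filter
    (fun e => e.Nonempty ∧
      ∀ f ∈ (C.edges.filter (fun e => Disjoint e D)).image (fun e => e \ U),
        f.Nonempty → f ⊆ e → f = e)

/-- The minor of `C` determined by deleting `D` and contracting `U`. -/
def minor (C : Clutter n) (D U : Finset (Fin n)) : Clutter n where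
  edges := C.minorEdges D U
  nonempty_edges := fun e he => ((mem_filter.mp he).2).1
  antichain := fun e he f hf hef =>
    ((mem_filter.mp hf).2).2 e (mem_filter.mp he).1 ((mem_filter.mp he).2).1 hef

/-- The König property: `α₀(C) = β₁(C)`. -/
def HasKonig (C : Clutter n) : Prop := C.coverNumber = C.matchNumber

/-- The packing property: every (proper) minor of `C` has the König property. -/
def PackingProperty (C : Clutter n) : Prop :=
  ∀ D U : Finset (Fin n), Disjoint D U →
    (∀ e ∈ C.edges, Disjoint e D → ¬ e ⊆ U) → (C.minor D U).HasKonig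

/-- The max-flow min-cut property: for every nonnegative integral `α` the LP
`min{⟨α,x⟩ : x ≥ 0, xA ≥ 1}` and its dual `max{⟨y,1⟩ : y ≥ 0, Ay ≤ α}` both have
integral optimum solutions (expressed via a pair of integral feasible solutions
with equal objective values, which are then optimal by LP duality). -/
def HasMFMC (C : Clutter n) : Prop :=
  ∀ α : Fin n → ℕ,
    ∃ (x : Fin n → ℕ) (y : Finset (Fin n) → ℕ),
      (∀ e ∈ C.edges, 1 ≤ ∑ i ∈ e, x i) ∧
      (∀ e, e ∉ C.edges → y e = 0) ∧
      (∀ i : Fin n, ∑ e ∈ C.edges.filter (fun e => i ∈ e), y e ≤ α i) ∧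
      (∑ i, α i * x i = ∑ e ∈ C.edges, y e)

/-- The incidence matrix of `C`, with columns indexed by the edges. -/
def inc (C : Clutter n) : Matrix (Fin n) {e // e ∈ C.edges} ℤ :=
  Matrix.of fun i e => if i ∈ e.1 then 1 else 0

end Clutter

/-- `Δ_r(A) = 1`: the gcd of all nonzero `r × r` subdeterminants of `A` is `1`,
i.e. every common divisor of them is a unit. -/
def DeltaOne {m m' : Type*} [Fintype m] [Fintype m'] (A : Matrix m m' ℤ) (r : ℕ) : Prop :=
  ∀ k : ℤ, (∀ (f : Fin r → m) (g : Fin r → m'), Function.Injective f → Function.Injective g →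
    (A.submatrix f g).det ≠ 0 → k ∣ (A.submatrix f g).det) → IsUnit k


/-- The pair `X_i = {x_{2i-1}, x_{2i}}` (with `0`-based indexing: `{x_{2i}, x_{2i+1}}`). -/
def pairCover (d : ℕ) (i : Fin d) : Finset (Fin (2 * d)) :=
  {⟨2 * i.1, by have h := i.2; omega⟩, ⟨2 * i.1 + 1, by have h := i.2; omega⟩}


open Module Submodule

theorem Submodule.mem_of_add_mem_of_add_sum_mem {K M ι : Type*} [Field K] [CharZero K]
    [AddCommGroup M] [Module K M] {V : Submodule K M} {c : M} {v : ι → M}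
    (hv : ∀ i, c + v i ∈ V) {P : Finset ι} (hP : c + ∑ k ∈ P, v k ∈ V) (hcard : P.card ≠ 1) :
    c ∈ V := by
  have key : ((1 : K) - P.card) • c = (c + ∑ k ∈ P, v k) - ∑ k ∈ P, (c + v k) := by
    rw [sum_add_distrib, sum_const, sub_smul, one_smul, Nat.cast_smul_eq_nsmul]
    abel
  have hne : (1 : K) - P.card ≠ 0 := sub_ne_zero.mpr (by exact_mod_cast hcard.symm)
  exact (V.smul_mem_iff hne).mp (key ▸ sub_mem hP (sum_mem fun k _ => hv k))

section TransversalIndicator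

variable (K : Type*) {ι : Type*} [Field K] [DecidableEq ι]

def transversalIndicator (P : Finset ι) : ι × Bool → K :=
  fun x => if x.2 = decide (x.1 ∈ P) then 1 else 0

def pairDiff (k : ι) : ι × Bool → K :=
  Pi.single (k, true) 1 - Pi.single (k, false) 1

def transversalBasis : Option ι → ι × Bool → K :=
  fun o => o.elim (transversalIndicator K ∅) (pairDiff K)

theorem transversalIndicator_eq_add_sum (P : Finset ι) :
    transversalIndicator K P = transversalIndicator K ∅ + ∑ k ∈ P, pairDiff K k := by
  funext ⟨j, b⟩
  by_cases hj : j ∈ P <;> cases b <;>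
    simp [transversalIndicator, pairDiff, Finset.sum_apply, Pi.single_apply, hj]

theorem linearIndependent_transversalBasis [Fintype ι] [Nonempty ι] :
    LinearIndependent K (transversalBasis K : Option ι → ι × Bool → K) := by
  rw [linearIndependent_option]
  constructor
  · rw [Fintype.linearIndependent_iff]
    intro g hg i
    simpa [transversalBasis, pairDiff, Finset.sum_apply, Pi.single_apply] using
      congrFun hg (i, true)
  · obtain ⟨j⟩ := ‹Nonempty ι›
    let ℓ : (ι × Bool → K) →ₗ[K] K := LinearMap.proj (R := K) (φ := fun _ => K) (j, true) +
      LinearMap.proj (R := K) (φ := fun _ => K) (j, false)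
    have hle : span K (Set.range (pairDiff K)) ≤ LinearMap.ker ℓ := by
      rw [span_le]
      rintro _ ⟨k, rfl⟩
      by_cases hk : k = j <;> simp [ℓ, pairDiff, hk]
    intro hmem
    simpa [ℓ, transversalBasis, transversalIndicator] using hle hmem

theorem finrank_span_transversalIndicator [CharZero K] [Fintype ι] [Nonempty ι] {κ : Type*}
    (P : κ → Finset ι) (hsingle : ∀ i, ∃ e, P e = {i}) (hcard : ∃ e, (P e).card ≠ 1) :
    finrank K (span K (Set.range fun e => transversalIndicator K (P e))) = Fintype.card ι + 1 := by
  set V := span K (Set.range fun e => transversalIndicator K (P e))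
  have hmem : ∀ e, transversalIndicator K (P e) ∈ V := fun e => subset_span ⟨e, rfl⟩
  have hsum : ∀ e, transversalIndicator K ∅ + ∑ k ∈ P e, pairDiff K k ∈ V := fun e =>
    transversalIndicator_eq_add_sum K (P e) ▸ hmem e
  have hsingle' : ∀ i, transversalIndicator K ∅ + pairDiff K i ∈ V := fun i => by
    obtain ⟨e, he⟩ := hsingle i
    simpa [he] using hsum e
  obtain ⟨e₀, he₀⟩ := hcard
  have hbase : transversalIndicator K ∅ ∈ V :=
    mem_of_add_mem_of_add_sum_mem hsingle' (hsum e₀) he₀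
  have hV : V = span K (Set.range (transversalBasis K)) := by
    apply le_antisymm <;> rw [span_le]
    · rintro _ ⟨e, rfl⟩
      simp only [SetLike.mem_coe, transversalIndicator_eq_add_sum K (P e)]
      exact add_mem (subset_span (Set.mem_range_self (f := transversalBasis K) none))
        (sum_mem fun k _ => subset_span (Set.mem_range_self (f := transversalBasis K) (some k)))
    · rintro _ ⟨o, rfl⟩
      cases o with
      | none => exact hbase
      | some k => simpa [transversalBasis] using sub_mem (hsingle' k) hbase
  rw [hV, finrank_span_eq_card (linearIndependent_transversalBasis K),
    Fintype.card_option]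

end TransversalIndicator

namespace Clutter

variable {n : ℕ} {C : Clutter n}

theorem isCover_univ (C : Clutter n) : C.IsCover univ := fun e he => by
  simpa using C.nonempty_edges e he

theorem le_coverNumber {k : ℕ} (h : ∀ S, C.IsCover S → k ≤ S.card) : k ≤ C.coverNumber :=
  le_csInf ⟨_, univ, C.isCover_univ, rfl⟩ (by rintro _ ⟨S, hS, rfl⟩; exact h S hS)

theorem exists_disjoint_edges_of_two_le_matchNumber (h : 2 ≤ C.matchNumber) :
    ∃ A ∈ C.edges, ∃ B ∈ C.edges, Disjoint A B := by
  set matchings := {k | ∃ M : Finset (Finset (Fin n)), M ⊆ C.edges ∧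
      (∀ e ∈ M, ∀ f ∈ M, e ≠ f → Disjoint e f) ∧ M.card = k}
  have hbdd : BddAbove matchings :=
    ⟨C.edges.card, by rintro _ ⟨M, hM, -, rfl⟩; exact card_le_card hM⟩
  have hne : matchings.Nonempty := ⟨0, ∅, empty_subset _, by simp, rfl⟩
  obtain ⟨M, hMC, hMdisj, hMcard⟩ := Nat.sSup_mem hne hbdd
  obtain ⟨A, hA, B, hB, hAB⟩ := one_lt_card.mp (hMcard ▸ h : 1 < M.card)
  exact ⟨A, hMC hA, B, hMC hB, hMdisj A hA B hB hAB⟩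

theorem IsMinCover.exists_inter_eq_singleton {S : Finset (Fin n)} {v : Fin n}
    (hS : C.IsMinCover S) (hv : v ∈ S) : ∃ e ∈ C.edges, e ∩ S = {v} := by
  have hnot : ¬ C.IsCover (S.erase v) := fun h =>
    erase_eq_self.mp (hS.2 _ (erase_subset v S) h) hv
  simp only [IsCover, not_forall, not_nonempty_iff_eq_empty] at hnot
  obtain ⟨e, he, hempty⟩ := hnot
  have honly : ∀ x ∈ e ∩ S, x = v := fun x hx => by
    rw [mem_inter] at hx
    by_contra hxv
    simpa [hempty] using mem_inter_of_mem hx.1 (mem_erase_of_ne_of_mem hxv hx.2)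
  obtain ⟨x, hx⟩ := hS.1 e he
  exact ⟨e, he, eq_singleton_iff_unique_mem.mpr ⟨honly x hx ▸ hx, honly⟩⟩

end Clutter

def pairEquiv (d : ℕ) : Fin d × Bool ≃ Fin (2 * d) where
  toFun x := ⟨2 * x.1 + if x.2 then 1 else 0, by have := x.1.2; split <;> omega⟩
  invFun v := (⟨v / 2, by omega⟩, decide (v.1 % 2 = 1))
  left_inv := by rintro ⟨k, _ | _⟩ <;> simp [Nat.mul_add_div]
  right_inv v := by
    ext
    simp only [decide_eq_true_eq]
    split <;> omega

section PairCover

variable {d : ℕ}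

theorem mem_pairCover_iff {v : Fin (2 * d)} {j : Fin d} :
    v ∈ pairCover d j ↔ ((pairEquiv d).symm v).1 = j := by
  simp [pairCover, pairEquiv, Fin.ext_iff]
  omega

theorem card_pairCover (j : Fin d) : (pairCover d j).card = 2 :=
  card_pair (by simp [Fin.ext_iff])

theorem card_eq_sum_card_inter_pairCover (S : Finset (Fin (2 * d))) :
    S.card = ∑ j, (S ∩ pairCover d j).card := by
  rw [card_eq_sum_card_fiberwise (f := fun v => ((pairEquiv d).symm v).1) (t := univ)
    fun _ _ => mem_coe.mpr (mem_univ _)]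
  congr! 2 with j
  ext v
  simp [mem_pairCover_iff]

def IsPairChart (φ : Fin d × Bool ≃ Fin (2 * d)) : Prop :=
  ∀ k b j, φ (k, b) ∈ pairCover d j ↔ k = j

def IsPairTransversal (e : Finset (Fin (2 * d))) : Prop :=
  ∀ j, (e ∩ pairCover d j).card = 1

def trueSet (φ : Fin d × Bool ≃ Fin (2 * d)) (e : Finset (Fin (2 * d))) : Finset (Fin d) :=
  univ.filter fun k => φ (k, true) ∈ e

theorem isPairChart_pairEquiv : IsPairChart (pairEquiv d) := fun k b j => by
  simp [mem_pairCover_iff]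

theorem IsPairChart.mem_iff {φ : Fin d × Bool ≃ Fin (2 * d)} (hφ : IsPairChart φ)
    {e : Finset (Fin (2 * d))} (he : IsPairTransversal e) (k : Fin d) (b : Bool) :
    φ (k, b) ∈ e ↔ b = decide (φ (k, true) ∈ e) := by
  obtain ⟨v, hv⟩ := card_eq_one.mp (he k)
  obtain ⟨⟨k', b₀⟩, rfl⟩ := φ.surjective v
  obtain rfl : k' = k := (hφ k' b₀ k).mp (mem_of_mem_inter_right (hv ▸ mem_singleton_self _))
  have hb : ∀ c, φ (k', c) ∈ e ↔ c = b₀ := fun c => by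
    have hpair : φ (k', c) ∈ pairCover d k' := (hφ k' c k').mpr rfl
    calc φ (k', c) ∈ e ↔ φ (k', c) ∈ e ∩ pairCover d k' := by simp [hpair]
      _ ↔ c = b₀ := by simp [hv]
  simp only [hb]
  cases b₀ <;> simp

theorem IsPairChart.trueSet_eq_compl_of_disjoint {φ : Fin d × Bool ≃ Fin (2 * d)}
    (hφ : IsPairChart φ) {A B : Finset (Fin (2 * d))} (hA : IsPairTransversal A)
    (hB : IsPairTransversal B) (hAB : Disjoint A B) : trueSet φ B = (trueSet φ A)ᶜ := by
  ext k
  have hnotB := disjoint_left.mp hAB ((hφ.mem_iff hA k (decide (φ (k, true) ∈ A))).mpr rfl)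
  rw [hφ.mem_iff hB] at hnotB
  by_cases h : φ (k, true) ∈ A <;> by_cases h' : φ (k, true) ∈ B <;> simp_all [trueSet]

-- For a transversal `S`, relabels each pair so that `(k, true)` is the vertex lying in `S`.
def pairEquivAlong (S : Finset (Fin (2 * d))) : Fin d × Bool ≃ Fin (2 * d) :=
  (Equiv.prodShear (Equiv.refl _) fun k =>
    if pairEquiv d (k, true) ∈ S then Equiv.refl Bool else Equiv.boolNot).trans (pairEquiv d)

theorem isPairChart_pairEquivAlong (S : Finset (Fin (2 * d))) :
    IsPairChart (pairEquivAlong S) := fun k b j => by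
  simpa [pairEquivAlong] using isPairChart_pairEquiv k _ j

theorem pairEquivAlong_true_mem {S : Finset (Fin (2 * d))} (hS : IsPairTransversal S)
    (k : Fin d) : pairEquivAlong S (k, true) ∈ S := by
  have := isPairChart_pairEquiv.mem_iff hS k false
  by_cases h : pairEquiv d (k, true) ∈ S <;> simp_all [pairEquivAlong]

theorem trueSet_pairEquivAlong_of_inter_eq {S e : Finset (Fin (2 * d))}
    (hS : IsPairTransversal S) {i : Fin d} (heS : e ∩ S = {pairEquivAlong S (i, true)}) :
    trueSet (pairEquivAlong S) e = {i} := by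
  ext k
  have : pairEquivAlong S (k, true) ∈ e ↔ pairEquivAlong S (k, true) ∈ e ∩ S := by
    simp [pairEquivAlong_true_mem hS k]
  simp [trueSet, this, heS]

end PairCover

namespace Clutter

variable {d : ℕ} {C : Clutter (2 * d)}

theorem isPairTransversal_of_mem_edges (hC : C.Uniform d)
    (hX : ∀ i, C.IsCover (pairCover d i)) {e : Finset (Fin (2 * d))} (he : e ∈ C.edges) :
    IsPairTransversal e := by
  have hpos : ∀ j ∈ univ, 1 ≤ (e ∩ pairCover d j).card := fun j _ =>
    card_pos.mpr (hX j e he)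
  have hsum : ∑ _j : Fin d, 1 = ∑ j, (e ∩ pairCover d j).card := by
    rw [← card_eq_sum_card_inter_pairCover, hC e he]
    simp
  exact fun j => ((sum_eq_sum_iff_of_le hpos).mp hsum j (mem_univ j)).symm

theorem isPairTransversal_of_isMinCover (hd : d ≠ 2) (hX : ∀ i, C.IsCover (pairCover d i))
    {S : Finset (Fin (2 * d))} (hS : C.IsMinCover S) (hcard : S.card = d) :
    IsPairTransversal S := by
  have hle : ∀ j ∈ univ, (S ∩ pairCover d j).card ≤ 1 := fun j _ => by
    by_contra! h
    have hsub : pairCover d j ⊆ S := by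
      have := eq_of_subset_of_card_le (inter_subset_right : S ∩ pairCover d j ⊆ _)
        (by rw [card_pairCover]; omega)
      exact this ▸ inter_subset_left
    exact hd (hcard ▸ hS.2 _ hsub (hX j) ▸ card_pairCover j)
  have hsum : ∑ j, (S ∩ pairCover d j).card = ∑ _j : Fin d, 1 := by
    rw [← card_eq_sum_card_inter_pairCover, hcard]
    simp
  exact fun j => (sum_eq_sum_iff_of_le hle).mp hsum j (mem_univ j)

theorem two_le_coverNumber (hd : 0 < d) (hX : ∀ i, C.IsMinCover (pairCover d i)) :
    2 ≤ C.coverNumber := by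
  refine le_coverNumber fun T hT => ?_
  by_contra! hlt
  obtain ⟨j, hTj⟩ : ∃ j, T ⊆ pairCover d j := by
    obtain rfl | ⟨v, hv⟩ := T.eq_empty_or_nonempty
    · exact ⟨⟨0, hd⟩, empty_subset _⟩
    · refine ⟨((pairEquiv d).symm v).1, fun x hx => ?_⟩
      rw [card_le_one.mp (by omega) x hx v hv, mem_pairCover_iff]
  have := card_pairCover j
  rw [← (hX j).2 T hTj hT] at this
  omega

theorem col_inc_submatrix_eq {K : Type*} [Field K] {φ : Fin d × Bool ≃ Fin (2 * d)}
    (hφ : IsPairChart φ) (hedges : ∀ e ∈ C.edges, IsPairTransversal e) :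
    ((C.inc.map (Int.cast : ℤ → K)).submatrix φ (Equiv.refl _)).col =
      fun e => transversalIndicator K (trueSet φ e.1) := by
  funext e ⟨k, b⟩
  simp [Matrix.col, inc, transversalIndicator, trueSet, hφ.mem_iff (hedges e.1 e.2) k b]

end Clutter

/-- Let `C` be a `d`-uniform clutter, `d ≥ 3`, on `2d` vertices whose
vertex set is partitioned into the pairs `X_i = {x_{2i-1}, x_{2i}}`, each a minimal vertex
cover of `C`. If `C` satisfies the König property and has a minimal vertex cover of size
`d`, then the incidence matrix of `C` has rank exactly `d + 1`. -/
theorem stmt15 {d : ℕ} (hd : 3 ≤ d) (C : Clutter (2 * d)) (hC : C.Uniform d)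
    (hX : ∀ i : Fin d, C.IsMinCover (pairCover d i))
    (hkonig : C.HasKonig)
    (hcov : ∃ S : Finset (Fin (2 * d)), C.IsMinCover S ∧ S.card = d) :
    (C.inc.map (Int.cast : ℤ → ℚ)).rank = d + 1 := by
  have : Nonempty (Fin d) := ⟨⟨0, by omega⟩⟩
  obtain ⟨S, hSmin, hScard⟩ := hcov
  have hS := C.isPairTransversal_of_isMinCover (by omega) (fun i => (hX i).1) hSmin hScard
  have hedges : ∀ e ∈ C.edges, IsPairTransversal e := fun _ he =>
    C.isPairTransversal_of_mem_edges hC (fun i => (hX i).1) he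
  have hφ := isPairChart_pairEquivAlong S
  have hsingle : ∀ i, ∃ e : C.edges, trueSet (pairEquivAlong S) e.1 = {i} := fun i => by
    obtain ⟨e, he, heS⟩ := hSmin.exists_inter_eq_singleton (pairEquivAlong_true_mem hS i)
    exact ⟨⟨e, he⟩, trueSet_pairEquivAlong_of_inter_eq hS heS⟩
  have hcard : ∃ e : C.edges, (trueSet (pairEquivAlong S) e.1).card ≠ 1 := by
    obtain ⟨A, hA, B, hB, hAB⟩ :=
      C.exists_disjoint_edges_of_two_le_matchNumber (hkonig ▸ C.two_le_coverNumber (by omega) hX)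
    have hsum := card_compl (trueSet (pairEquivAlong S) A)
    rw [← hφ.trueSet_eq_compl_of_disjoint (hedges A hA) (hedges B hB) hAB] at hsum
    by_contra! h
    rw [h ⟨A, hA⟩, h ⟨B, hB⟩, Fintype.card_fin] at hsum
    omega
  rw [← Matrix.rank_submatrix _ (pairEquivAlong S) (Equiv.refl _),
    Matrix.rank_eq_finrank_span_cols, C.col_inc_submatrix_eq hφ hedges,
    finrank_span_transversalIndicator ℚ _ hsingle hcard, Fintype.card_fin]
end

section
/- Let G be an unmixed bipartite graph and let C be the clutter whose edges are the minimal vertex covers of G, with incidence matrix A. Then C is 2-partitionable: its vertex set admits a partition into minimal vertex covers of C each of size 2, and consequently rank(A) ≤ α₀(G) + 1. -/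
open Finset

/-- `S` is a vertex cover of the graph `G`. -/
def GIsCover {n : ℕ} (G : SimpleGraph (Fin n)) (S : Finset (Fin n)) : Prop :=
  ∀ a b : Fin n, G.Adj a b → a ∈ S ∨ b ∈ S

/-- `S` is a minimal vertex cover of the graph `G`. -/
def GIsMinCover {n : ℕ} (G : SimpleGraph (Fin n)) (S : Finset (Fin n)) : Prop :=
  GIsCover G S ∧ ∀ T ⊆ S, GIsCover G T → T = S

/-- The vertex covering number `α₀(G)` of a graph. -/
noncomputable def gCoverNumber {n : ℕ} (G : SimpleGraph (Fin n)) : ℕ :=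
  sInf {k | ∃ S : Finset (Fin n), GIsCover G S ∧ S.card = k}

open Classical in
/-- The blocker clutter of `G`: its edges are the (nonempty) minimal vertex covers
of `G`. -/
noncomputable def blocker {n : ℕ} (G : SimpleGraph (Fin n)) : Clutter n where
  edges := Finset.univ.filter (fun S => S.Nonempty ∧ GIsMinCover G S)
  nonempty_edges := fun e he => ((Finset.mem_filter.mp he).2).1
  antichain := fun e he f hf hef =>
    ((Finset.mem_filter.mp hf).2).2.2 e hef ((Finset.mem_filter.mp he).2).2.1


private lemma exists_minCover_subset {n : ℕ} (G : SimpleGraph (Fin n)) :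
    ∀ K : Finset (Fin n), GIsCover G K → ∃ T ⊆ K, GIsMinCover G T := by
  intro K
  induction K using Finset.strongInductionOn with
  | _ K ih =>
    intro hK
    by_cases h : ∀ T ⊆ K, GIsCover G T → T = K
    · exact ⟨K, Finset.Subset.refl K, hK, h⟩
    · push_neg at h
      obtain ⟨T, hTK, hTcov, hTne⟩ := h
      obtain ⟨S, hST, hS⟩ := ih T (ssubset_of_subset_of_ne hTK hTne) hTcov
      exact ⟨S, hST.trans hTK, hS⟩

set_option maxHeartbeats 1000000 in
/-- Let `G` be an unmixed bipartite graph (without isolated vertices)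
and let `C` be the clutter of minimal vertex covers of `G`, with incidence matrix `A`.
Then `C` is `2`-partitionable: its vertex set admits a partition into minimal vertex
covers of `C` each of size `2`; consequently `rank(A) ≤ α₀(G) + 1`. -/
theorem stmt17 {n : ℕ} (G : SimpleGraph (Fin n))
    (hbip : ∃ s : Finset (Fin n), ∀ a b : Fin n, G.Adj a b → (a ∈ s ↔ b ∉ s))
    (hiso : ∀ v : Fin n, ∃ u : Fin n, G.Adj v u)
    (hunmixed : ∀ S T : Finset (Fin n),
      GIsMinCover G S → GIsMinCover G T → S.card = T.card) :
    (∃ P : Finset (Finset (Fin n)),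
      (∀ X ∈ P, (blocker G).IsMinCover X ∧ X.card = 2) ∧
      (∀ X ∈ P, ∀ Y ∈ P, X ≠ Y → Disjoint X Y) ∧
      (∀ v : Fin n, ∃ X ∈ P, v ∈ X)) ∧
    ((blocker G).inc.map (Int.cast : ℤ → ℚ)).rank ≤ gCoverNumber G + 1 := by
  classical
  obtain ⟨s, hs⟩ := hbip
  -- `s` is a cover
  have hscov : GIsCover G s := by
    intro a b hab
    by_cases ha : a ∈ s
    · exact Or.inl ha
    · right
      by_contra hb
      exact ha ((hs a b hab).mpr hb)
  -- `s` is a minimal cover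
  have hsmin : GIsMinCover G s := by
    refine ⟨hscov, fun T hT hTcov => ?_⟩
    apply Finset.Subset.antisymm hT
    intro v hv
    by_contra hvT
    obtain ⟨u, hu⟩ := hiso v
    have hus : u ∉ s := (hs v u hu).mp hv
    rcases hTcov v u hu with h | h
    · exact hvT h
    · exact hus (hT h)
  -- `sᶜ` is a minimal cover
  have hsccov : GIsCover G sᶜ := by
    intro a b hab
    by_cases ha : a ∈ s
    · exact Or.inr (Finset.mem_compl.mpr ((hs a b hab).mp ha))
    · exact Or.inl (Finset.mem_compl.mpr ha)
  have hscmin : GIsMinCover G sᶜ := by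
    refine ⟨hsccov, fun T hT hTcov => ?_⟩
    apply Finset.Subset.antisymm hT
    intro v hv
    by_contra hvT
    obtain ⟨u, hu⟩ := hiso v
    have hvs : v ∉ s := Finset.mem_compl.mp hv
    have hus : u ∈ s := by
      by_contra h
      exact hvs ((hs v u hu).mpr h)
    rcases hTcov v u hu with h | h
    · exact hvT h
    · exact Finset.mem_compl.mp (hT h) hus
  -- every cover has at least `s.card` elements
  have hlow : ∀ K, GIsCover G K → s.card ≤ K.card := by
    intro K hK
    obtain ⟨T, hTK, hT⟩ := exists_minCover_subset G K hK
    calc s.card = T.card := hunmixed s T hsmin hT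
    _ ≤ K.card := Finset.card_le_card hTK
  have hcc : sᶜ.card = s.card := hunmixed sᶜ s hscmin hsmin
  -- Hall's condition and the matching
  set ι := {a : Fin n // a ∈ s} with hι
  let t : ι → Finset (Fin n) := fun a => Finset.univ.filter (fun b => G.Adj a.val b)
  have hall : ∀ A : Finset ι, A.card ≤ (A.biUnion t).card := by
    intro A
    set A' := A.image (fun a : ι => a.val) with hA'
    have hA'card : A'.card = A.card :=
      Finset.card_image_of_injective _ Subtype.val_injective
    have hA's : A' ⊆ s := by
      intro x hx
      rw [hA', Finset.mem_image] at hx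
      obtain ⟨a, _, rfl⟩ := hx
      exact a.property
    set B := A.biUnion t with hB
    have hK : GIsCover G ((s \ A') ∪ B) := by
      have key : ∀ x y : Fin n, G.Adj x y → x ∈ s → x ∈ (s \ A') ∪ B ∨ y ∈ (s \ A') ∪ B := by
        intro x y hxy hx
        by_cases hxA : x ∈ A'
        · right
          rw [hA', Finset.mem_image] at hxA
          obtain ⟨a, haA, hax⟩ := hxA
          apply Finset.mem_union_right
          rw [hB, Finset.mem_biUnion]
          exact ⟨a, haA, by simp [t, hax ▸ hxy]⟩
        · exact Or.inl (Finset.mem_union_left _ (Finset.mem_sdiff.mpr ⟨hx, hxA⟩))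
      intro x y hxy
      by_cases hx : x ∈ s
      · exact key x y hxy hx
      · have hy : y ∈ s := by
          by_contra h
          exact hx ((hs x y hxy).mpr h)
        exact (key y x hxy.symm hy).symm
    have h0 := hlow _ hK
    have h1 : ((s \ A') ∪ B).card ≤ (s \ A').card + B.card := Finset.card_union_le _ _
    have h2 : (s \ A').card = s.card - A'.card := Finset.card_sdiff_of_subset hA's
    have h3 : A'.card ≤ s.card := Finset.card_le_card hA's
    omega
  obtain ⟨f, hfinj, hft⟩ := (Finset.all_card_le_biUnion_card_iff_exists_injective t).mp hall
  have hfadj : ∀ a : ι, G.Adj a.val (f a) := by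
    intro a
    have := hft a
    simpa [t] using this
  have hfs : ∀ a : ι, f a ∉ s := fun a => (hs a.val (f a) (hfadj a)).mp a.property
  have hcardι : (Finset.univ : Finset ι).card = s.card := by
    rw [Finset.card_univ]
    exact Fintype.card_coe s
  have himg : Finset.univ.image f = sᶜ := by
    apply Finset.eq_of_subset_of_card_le
    · intro x hx
      rw [Finset.mem_image] at hx
      obtain ⟨a, _, rfl⟩ := hx
      exact Finset.mem_compl.mpr (hfs a)
    · rw [hcc, Finset.card_image_of_injective _ hfinj, hcardι]
  -- the pairs
  let pair : ι → Finset (Fin n) := fun a => {a.val, f a}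
  have hne : ∀ a : ι, a.val ≠ f a := fun a h => hfs a (h ▸ a.property)
  have hpaircard : ∀ a, (pair a).card = 2 := fun a => Finset.card_pair (hne a)
  have hedge : ∀ e, e ∈ (blocker G).edges ↔ (e.Nonempty ∧ GIsMinCover G e) := by
    intro e
    simp [blocker]
  have havoid : ∀ v : Fin n, ∃ e ∈ (blocker G).edges, v ∉ e := by
    intro v
    have hcov : GIsCover G (Finset.univ \ {v}) := by
      intro a b hab
      by_cases ha : a = v
      · subst ha
        right
        simp [Finset.mem_sdiff, (hab.ne).symm]
      · left
        simp [Finset.mem_sdiff, ha]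
    obtain ⟨T, hTsub, hT⟩ := exists_minCover_subset G _ hcov
    have hvT : v ∉ T := fun h => by simpa using hTsub h
    have hTne : T.Nonempty := by
      obtain ⟨u, hu⟩ := hiso v
      rcases hT.1 v u hu with h | h
      · exact ⟨v, h⟩
      · exact ⟨u, h⟩
    exact ⟨T, (hedge T).mpr ⟨hTne, hT⟩, hvT⟩
  have hpaircover : ∀ a : ι, (blocker G).IsCover (pair a) := by
    intro a e he
    obtain ⟨hene, hemin⟩ := (hedge e).mp he
    rcases hemin.1 a.val (f a) (hfadj a) with h | h
    · exact ⟨a.val, Finset.mem_inter.mpr ⟨h, by simp [pair]⟩⟩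
    · exact ⟨f a, Finset.mem_inter.mpr ⟨h, by simp [pair]⟩⟩
  have hpairmin : ∀ a : ι, (blocker G).IsMinCover (pair a) := by
    intro a
    refine ⟨hpaircover a, ?_⟩
    intro T hT hTcov
    apply Finset.Subset.antisymm hT
    have h1 : a.val ∈ T := by
      by_contra hxT
      obtain ⟨e, he, hxe⟩ := havoid (f a)
      obtain ⟨y, hy⟩ := hTcov e he
      rw [Finset.mem_inter] at hy
      have hyp := hT hy.2
      simp only [pair, Finset.mem_insert, Finset.mem_singleton] at hyp
      rcases hyp with rfl | rfl
      · exact hxT hy.2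
      · exact hxe hy.1
    have h2 : f a ∈ T := by
      by_contra hxT
      obtain ⟨e, he, hxe⟩ := havoid a.val
      obtain ⟨y, hy⟩ := hTcov e he
      rw [Finset.mem_inter] at hy
      have hyp := hT hy.2
      simp only [pair, Finset.mem_insert, Finset.mem_singleton] at hyp
      rcases hyp with rfl | rfl
      · exact hxe hy.1
      · exact hxT hy.2
    intro x hx
    simp only [pair, Finset.mem_insert, Finset.mem_singleton] at hx
    rcases hx with rfl | rfl
    · exact h1
    · exact h2
  have hpairdisj : ∀ a b : ι, a ≠ b → Disjoint (pair a) (pair b) := by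
    intro a b hab
    rw [Finset.disjoint_left]
    intro x hxa hxb
    simp only [pair, Finset.mem_insert, Finset.mem_singleton] at hxa hxb
    rcases hxa with rfl | rfl <;> rcases hxb with h | h
    · exact hab (Subtype.ext h)
    · exact hfs b (h ▸ a.property)
    · exact hfs a (h.symm ▸ b.property)
    · exact hab (hfinj h)
  have hpaircov : ∀ v : Fin n, ∃ a : ι, v ∈ pair a := by
    intro v
    by_cases hv : v ∈ s
    · exact ⟨⟨v, hv⟩, by simp [pair]⟩
    · have : v ∈ Finset.univ.image f := himg ▸ Finset.mem_compl.mpr hv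
      rw [Finset.mem_image] at this
      obtain ⟨a, _, ha⟩ := this
      exact ⟨a, by simp [pair, ha]⟩
  -- exactly-one property
  have hone : ∀ e ∈ (blocker G).edges, ∀ a : ι,
      ((a.val ∈ e ∧ f a ∉ e) ∨ (a.val ∉ e ∧ f a ∈ e)) := by
    intro e he a
    obtain ⟨hene, hemin⟩ := (hedge e).mp he
    have hcard : e.card = s.card := hunmixed e s hemin hsmin
    have hdisj : ∀ a' ∈ (Finset.univ : Finset ι), ∀ b' ∈ (Finset.univ : Finset ι),
        a' ≠ b' → Disjoint (e ∩ pair a') (e ∩ pair b') := by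
      intro a' _ b' _ hab
      exact Finset.disjoint_of_subset_left (Finset.inter_subset_right)
        (Finset.disjoint_of_subset_right (Finset.inter_subset_right) (hpairdisj a' b' hab))
    have hsum : ∑ a' : ι, (e ∩ pair a').card = e.card := by
      rw [← Finset.card_biUnion hdisj]
      congr 1
      apply Finset.Subset.antisymm
      · intro x hx
        rw [Finset.mem_biUnion] at hx
        obtain ⟨a', _, hx⟩ := hx
        exact (Finset.mem_inter.mp hx).1
      · intro x hx
        obtain ⟨a', ha'⟩ := hpaircov x
        exact Finset.mem_biUnion.mpr ⟨a', Finset.mem_univ _, Finset.mem_inter.mpr ⟨hx, ha'⟩⟩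
    have hge : ∀ a' : ι, 1 ≤ (e ∩ pair a').card := by
      intro a'
      exact Finset.card_pos.mpr (hpaircover a' e he)
    have htot : ∑ _a' : ι, (1 : ℕ) = ∑ a' : ι, (e ∩ pair a').card := by
      rw [hsum, hcard, Finset.sum_const, smul_eq_mul, mul_one, hcardι]
    have hcards : (e ∩ pair a).card = 1 :=
      ((Finset.sum_eq_sum_iff_of_le (fun i _ => hge i)).mp htot a (Finset.mem_univ a)).symm
    have hnotboth : ¬(a.val ∈ e ∧ f a ∈ e) := by
      rintro ⟨h1, h2⟩
      have hsub : pair a ⊆ e := by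
        intro x hx
        simp only [pair, Finset.mem_insert, Finset.mem_singleton] at hx
        rcases hx with rfl | rfl
        · exact h1
        · exact h2
      rw [Finset.inter_eq_right.mpr hsub, hpaircard a] at hcards
      omega
    rcases hemin.1 a.val (f a) (hfadj a) with h | h
    · exact Or.inl ⟨h, fun hf => hnotboth ⟨h, hf⟩⟩
    · exact Or.inr ⟨fun hv => hnotboth ⟨hv, h⟩, h⟩
  -- cover number
  have hcovnum : s.card ≤ gCoverNumber G := by
    rw [gCoverNumber]
    have hne2 : {k | ∃ S : Finset (Fin n), GIsCover G S ∧ S.card = k}.Nonempty :=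
      ⟨s.card, s, hscov, rfl⟩
    apply le_csInf hne2
    rintro k ⟨K, hK, rfl⟩
    exact hlow K hK
  constructor
  · -- 2-partitionability
    refine ⟨Finset.univ.image pair, ?_, ?_, ?_⟩
    · intro X hX
      rw [Finset.mem_image] at hX
      obtain ⟨a, _, rfl⟩ := hX
      exact ⟨hpairmin a, hpaircard a⟩
    · intro X hX Y hY hXY
      rw [Finset.mem_image] at hX hY
      obtain ⟨a, _, rfl⟩ := hX
      obtain ⟨b, _, rfl⟩ := hY
      exact hpairdisj a b (fun h => hXY (by rw [h]))
    · intro v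
      obtain ⟨a, ha⟩ := hpaircov v
      exact ⟨pair a, Finset.mem_image.mpr ⟨a, Finset.mem_univ _, rfl⟩, ha⟩
  · -- rank bound
    set M := ((blocker G).inc.map (Int.cast : ℤ → ℚ)) with hM
    rw [Matrix.rank_eq_finrank_span_row]
    set T : Finset ({e // e ∈ (blocker G).edges} → ℚ) :=
      insert (fun _ => (1 : ℚ)) (s.image (fun i => M i)) with hT
    have hspan : Submodule.span ℚ (Set.range M) ≤ Submodule.span ℚ (T : Set _) := by
      rw [Submodule.span_le]
      rintro _ ⟨i, rfl⟩
      by_cases hi : i ∈ s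
      · apply Submodule.subset_span
        rw [hT]
        simp only [Finset.coe_insert, Set.mem_insert_iff, Finset.coe_image, Set.mem_image,
          Finset.mem_coe]
        exact Or.inr ⟨i, hi, rfl⟩
      · have hic : i ∈ Finset.univ.image f := himg ▸ Finset.mem_compl.mpr hi
        rw [Finset.mem_image] at hic
        obtain ⟨a, _, ha⟩ := hic
        have hrow : M i = (fun _ => (1 : ℚ)) - M a.val := by
          funext e
          have hx := hone e.val e.property a
          simp only [hM, Clutter.inc, Matrix.map_apply, Matrix.of_apply, Pi.sub_apply]
          rcases hx with ⟨h1, h2⟩ | ⟨h1, h2⟩ <;> simp [← ha, h1, h2]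
        rw [hrow]
        refine sub_mem (Submodule.subset_span ?_) (Submodule.subset_span ?_)
        · rw [hT]
          simp
        · rw [hT]
          simp only [Finset.coe_insert, Set.mem_insert_iff, Finset.coe_image, Set.mem_image,
            Finset.mem_coe]
          exact Or.inr ⟨a.val, a.property, rfl⟩
    haveI hfin : Module.Finite ℚ (Submodule.span ℚ (T : Set ({e // e ∈ (blocker G).edges} → ℚ))) :=
      Module.Finite.span_finset ℚ T
    have step1 : Module.finrank ℚ (Submodule.span ℚ (Set.range M))
        ≤ Module.finrank ℚ (Submodule.span ℚ (T : Set ({e // e ∈ (blocker G).edges} → ℚ))) :=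
      Submodule.finrank_mono hspan
    have step2 : Module.finrank ℚ (Submodule.span ℚ (T : Set ({e // e ∈ (blocker G).edges} → ℚ)))
        ≤ T.card := finrank_span_finset_le_card T
    calc Module.finrank ℚ (Submodule.span ℚ (Set.range M))
        ≤ Module.finrank ℚ (Submodule.span ℚ (T : Set ({e // e ∈ (blocker G).edges} → ℚ))) := step1
      _ ≤ T.card := step2
      _ ≤ s.card + 1 := by
          rw [hT]
          calc (insert (fun _ => (1:ℚ)) (s.image (fun i => M i))).card
              ≤ (s.image (fun i => M i)).card + 1 := Finset.card_insert_le _ _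
            _ ≤ s.card + 1 := by
                have := Finset.card_image_le (s := s) (f := fun i => M i)
                omega
      _ ≤ gCoverNumber G + 1 := by omega
end

section
/- A vector α ∈ ℝ^n is an integral vertex of the set covering polyhedron Q(A) = {x : x ≥ 0, xA ≥ 1} of a clutter C if and only if α is the characteristic vector of a minimal vertex cover of C. -/
open Finset

/-!
If a vertex `α` of `Q(A)` had `α i > 0` and no edge through `i` tight (`∑_{j ∈ e} α j = 1`),
then `α ± ε eᵢ` would both lie in `Q(A)` for small `ε > 0`. Hence every coordinate of a vertex
is at most `1`, an integral vertex is the characteristic vector `χ_S` of a cover `S`, and the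
tight edge through `i ∈ S` meets `S` only in `i`, which is exactly minimality of `S`.
Conversely, if `S` is a minimal cover, each `i ∈ S` has such a private edge, so every
`x ∈ Q(A)` vanishing off `S` satisfies `χ_S ≤ x`. Both endpoints of an open segment through
`χ_S` vanish off `S` (as `x ≥ 0`), hence dominate `χ_S`, hence equal it.
-/

open Filter Topology

section Convex

variable {𝕜 E : Type*} [Field 𝕜] [LinearOrder 𝕜] [IsStrictOrderedRing 𝕜] [AddCommGroup E]
  [Module 𝕜 E]

theorem eq_zero_of_sub_mem_of_add_mem {A : Set E} {x v : E} (hx : x ∈ A.extremePoints 𝕜)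
    (hsub : x - v ∈ A) (hadd : x + v ∈ A) : v = 0 :=
  sub_eq_self.mp (hx.2 hsub hadd (mem_openSegment_sub_add x v))

theorem eq_of_le_of_le_of_mem_openSegment {a x y : 𝕜} (hx : a ≤ x) (hy : a ≤ y)
    (h : a ∈ openSegment 𝕜 x y) : x = a := by
  obtain ⟨s, t, hs, ht, hst, rfl⟩ := h
  simp only [smul_eq_mul] at hx hy ⊢
  obtain rfl : s = 1 - t := by linarith
  have hyx : y ≤ x := by nlinarith
  have hxy : x ≤ y := by nlinarith
  obtain rfl := le_antisymm hyx hxy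
  ring

end Convex

def charVec {n : ℕ} (S : Finset (Fin n)) : Fin n → ℝ := fun i => if i ∈ S then 1 else 0

theorem sum_charVec {n : ℕ} (S e : Finset (Fin n)) : ∑ i ∈ e, charVec S i = #(e ∩ S) := by
  simp [charVec, Finset.sum_ite_mem]

namespace Clutter

variable {n : ℕ} (C : Clutter n)

theorem isMinCover_iff_forall_exists_inter_eq_singleton {S : Finset (Fin n)} :
    C.IsMinCover S ↔ C.IsCover S ∧ ∀ i ∈ S, ∃ e ∈ C.edges, e ∩ S = {i} := by
  refine and_congr_right fun hS => ⟨fun hmin i hi => ?_, fun hpriv T hTS hT => ?_⟩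
  · have hnot : ¬ C.IsCover (S.erase i) := fun h =>
      Finset.notMem_erase i S (by rwa [hmin _ (S.erase_subset i) h])
    simp only [IsCover, not_forall, Finset.not_nonempty_iff_eq_empty] at hnot
    obtain ⟨e, he, hempty⟩ := hnot
    rw [Finset.inter_erase, Finset.erase_eq_empty_iff] at hempty
    exact ⟨e, he, hempty.resolve_left (hS e he).ne_empty⟩
  · by_contra hne
    obtain ⟨i, hiS, hiT⟩ := Finset.exists_of_ssubset (hTS.ssubset_of_ne hne)
    obtain ⟨e, he, hei⟩ := hpriv i hiS
    obtain ⟨j, hj⟩ := hT e he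
    have hji : j ∈ e ∩ S := Finset.inter_subset_inter_left hTS hj
    rw [hei, Finset.mem_singleton] at hji
    exact hiT (hji ▸ (Finset.mem_inter.mp hj).2)

theorem charVec_mem_QA_iff {S : Finset (Fin n)} : charVec S ∈ C.QA ↔ C.IsCover S := by
  simp only [QA, IsCover, Set.mem_ofPred_eq, sum_charVec, Nat.one_le_cast, Finset.one_le_card]
  exact and_iff_right fun i => by unfold charVec; split_ifs <;> norm_num

theorem add_smul_single_mem_QA {α : Fin n → ℝ} (hα : α ∈ C.QA) {i : Fin n} {c : ℝ}
    (hi : 0 ≤ α i + c) (hedges : ∀ e ∈ C.edges, i ∈ e → 1 ≤ ∑ j ∈ e, α j + c) :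
    α + c • Pi.single i 1 ∈ C.QA := by
  refine ⟨fun j => ?_, fun e he => ?_⟩
  · rcases eq_or_ne j i with rfl | hji
    · simpa using hi
    · simpa [hji] using hα.1 j
  · simp only [Pi.add_apply, Pi.smul_apply, smul_eq_mul, Finset.sum_add_distrib,
      ← Finset.mul_sum, Finset.sum_pi_single']
    split_ifs with hie
    · simpa using hedges e he hie
    · simpa using hα.2 e he

theorem exists_tight_edge_of_mem_extremePoints {α : Fin n → ℝ}
    (hα : α ∈ C.QA.extremePoints ℝ) {i : Fin n} (hi : 0 < α i) :
    ∃ e ∈ C.edges, i ∈ e ∧ ∑ j ∈ e, α j = 1 := by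
  by_contra! hslack
  set I := C.edges.filter (i ∈ ·)
  have hsmall : ∀ᶠ ε in 𝓝 (0 : ℝ), ε ≤ α i ∧ ∀ e ∈ I, ε ≤ ∑ j ∈ e, α j - 1 := by
    refine (eventually_le_nhds hi).and ((eventually_all_finset I).2 fun e he => ?_)
    obtain ⟨he, hie⟩ := Finset.mem_filter.mp he
    exact eventually_le_nhds (sub_pos.mpr ((hα.1.2 e he).lt_of_ne (hslack e he hie).symm))
  obtain ⟨ε, ⟨hεi, hεI⟩, hε : 0 < ε⟩ :=
    ((hsmall.filter_mono nhdsWithin_le_nhds).and self_mem_nhdsWithin).exists (f := 𝓝[>] 0)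
  have hsub : α + (-ε) • Pi.single i 1 ∈ C.QA :=
    C.add_smul_single_mem_QA hα.1 (by linarith) fun e he hie => by
      linarith [hεI e (Finset.mem_filter.mpr ⟨he, hie⟩)]
  have hadd : α + ε • Pi.single i 1 ∈ C.QA :=
    C.add_smul_single_mem_QA hα.1 (by linarith [hα.1.1 i]) fun e he _ => by
      linarith [hα.1.2 e he, hε]
  rw [neg_smul, ← sub_eq_add_neg] at hsub
  exact hε.ne' (by simpa using congrFun (eq_zero_of_sub_mem_of_add_mem hα hsub hadd) i)

theorem le_one_of_mem_extremePoints {α : Fin n → ℝ} (hα : α ∈ C.QA.extremePoints ℝ)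
    (i : Fin n) : α i ≤ 1 := by
  rcases (hα.1.1 i).eq_or_lt with h | h
  · linarith
  obtain ⟨e, he, hie, hsum⟩ := C.exists_tight_edge_of_mem_extremePoints hα h
  exact hsum ▸ Finset.single_le_sum (fun j _ => hα.1.1 j) hie

theorem eq_charVec_of_mem_extremePoints {α : Fin n → ℝ} (hα : α ∈ C.QA.extremePoints ℝ)
    (hint : ∀ i, ∃ z : ℤ, α i = z) : α = charVec {i | α i = 1} := by
  funext i
  obtain ⟨z, hz⟩ := hint i
  have hz0 : 0 ≤ z := by exact_mod_cast hz ▸ hα.1.1 i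
  have hz1 : z ≤ 1 := by exact_mod_cast hz ▸ C.le_one_of_mem_extremePoints hα i
  interval_cases z <;> simp [charVec, hz]

theorem isMinCover_of_charVec_mem_extremePoints {S : Finset (Fin n)}
    (h : charVec S ∈ C.QA.extremePoints ℝ) : C.IsMinCover S := by
  rw [isMinCover_iff_forall_exists_inter_eq_singleton]
  refine ⟨C.charVec_mem_QA_iff.mp h.1, fun i hi => ?_⟩
  obtain ⟨e, he, hie, hsum⟩ :=
    C.exists_tight_edge_of_mem_extremePoints h (i := i) (by simp [charVec, hi])
  rw [sum_charVec, Nat.cast_eq_one, Finset.card_eq_one] at hsum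
  obtain ⟨j, hj⟩ := hsum
  have hij : i ∈ e ∩ S := Finset.mem_inter.mpr ⟨hie, hi⟩
  rw [hj, Finset.mem_singleton] at hij
  exact ⟨e, he, hij ▸ hj⟩

theorem charVec_le_of_mem_QA {S : Finset (Fin n)} (hS : C.IsMinCover S) {x : Fin n → ℝ}
    (hx : x ∈ C.QA) (hsupp : ∀ k ∉ S, x k = 0) : charVec S ≤ x := by
  intro i
  by_cases hi : i ∈ S
  · obtain ⟨e, he, hei⟩ := (C.isMinCover_iff_forall_exists_inter_eq_singleton.mp hS).2 i hi
    have hie : i ∈ e := (Finset.mem_inter.mp (hei ▸ Finset.mem_singleton_self i)).1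
    have hsum : ∑ k ∈ e, x k = x i := Finset.sum_eq_single_of_mem i hie fun k hk hki =>
      hsupp k fun hkS => hki (by simpa [hei] using Finset.mem_inter.mpr ⟨hk, hkS⟩)
    simpa [charVec, hi, hsum] using hx.2 e he
  · simpa [charVec, hi] using hx.1 i

theorem charVec_mem_extremePoints {S : Finset (Fin n)} (hS : C.IsMinCover S) :
    charVec S ∈ C.QA.extremePoints ℝ := by
  refine ⟨C.charVec_mem_QA_iff.mpr hS.1, fun x₁ hx₁ x₂ hx₂ hseg => ?_⟩
  have hcoord : ∀ i, charVec S i ∈ openSegment ℝ (x₁ i) (x₂ i) := fun i =>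
    Pi.openSegment_subset x₁ x₂ hseg i (Set.mem_univ i)
  have hsupp : ∀ k ∉ S, x₁ k = 0 ∧ x₂ k = 0 := fun k hk => by
    have h0 : charVec S k = 0 := by simp [charVec, hk]
    refine ⟨?_, ?_⟩ <;> rw [← h0]
    · exact eq_of_le_of_le_of_mem_openSegment (h0 ▸ hx₁.1 k) (h0 ▸ hx₂.1 k) (hcoord k)
    · exact eq_of_le_of_le_of_mem_openSegment (h0 ▸ hx₂.1 k) (h0 ▸ hx₁.1 k)
        (openSegment_symm ℝ (x₁ k) (x₂ k) ▸ hcoord k)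
  funext i
  exact eq_of_le_of_le_of_mem_openSegment
    (C.charVec_le_of_mem_QA hS hx₁ (fun k hk => (hsupp k hk).1) i)
    (C.charVec_le_of_mem_QA hS hx₂ (fun k hk => (hsupp k hk).2) i) (hcoord i)

end Clutter

/-- A vector `α ∈ ℝⁿ` is an integral vertex of the set covering
polyhedron `Q(A)` of a clutter `C` if and only if `α` is the characteristic vector of a
minimal vertex cover of `C`. -/
theorem stmt19 {n : ℕ} (C : Clutter n) (α : Fin n → ℝ) :
    (α ∈ Set.extremePoints ℝ C.QA ∧ ∀ i, ∃ z : ℤ, α i = (z : ℝ)) ↔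
    ∃ S : Finset (Fin n), C.IsMinCover S ∧ α = fun i => if i ∈ S then 1 else 0 := by
  constructor
  · rintro ⟨hα, hint⟩
    have hαS := C.eq_charVec_of_mem_extremePoints hα hint
    exact ⟨_, C.isMinCover_of_charVec_mem_extremePoints (hαS ▸ hα), hαS⟩
  · rintro ⟨S, hS, rfl⟩
    refine ⟨C.charVec_mem_extremePoints hS, fun i => ⟨if i ∈ S then 1 else 0, ?_⟩⟩
    split_ifs with hi <;> simp [hi]
end
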